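/- Let A be an m × n rational matrix and let C = { x ∈ ℝⁿ : x ≥ 0, A x = 0 } be the associated polyhedral cone, with S = C ∩ ℤⁿ its lattice points. For a nonzero x ∈ S, the following are equivalent: (1) x lies on an extreme ray of C, i.e. whenever x = y + z with y, z ∈ C, both y and z are nonnegative scalar multiples of x; (2) for all positive integers k, n', m' and all X, Y ∈ S with k·x = n'·X + m'·Y, both X and Y are nonnegative rational multiples of x. -/
import Mathlib


set_option maxHeartbeats 1000000 in
/-- Characterization of vertex solutions: for a nonzero lattice point `x` of the rational
polyhedral cone `C = {x ≥ 0 : Ax = 0}`, `x` lies on an extreme ray of `C` iff whenever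
`k x = n' X + m' Y` with `k, n', m'` positive integers and `X, Y` lattice points of `C`,
both `X` and `Y` are nonnegative rational multiples of `x`. -/
theorem vertex_solution_iff (m n : ℕ) (A : Matrix (Fin m) (Fin n) ℚ)
    (C : Set (Fin n → ℝ))
    (hC : C = {x | (∀ i, 0 ≤ x i) ∧ (A.map (fun q => (q : ℝ))).mulVec x = 0})
    (S : Set (Fin n → ℝ))
    (hS : S = {x ∈ C | ∀ i, ∃ z : ℤ, x i = (z : ℝ)})
    (x : Fin n → ℝ) (hx : x ∈ S) (hx0 : x ≠ 0) :
    (∀ y z, y ∈ C → z ∈ C → x = y + z →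
        (∃ a : ℝ, 0 ≤ a ∧ y = a • x) ∧ (∃ b : ℝ, 0 ≤ b ∧ z = b • x)) ↔
      (∀ (k n' m' : ℕ), 0 < k → 0 < n' → 0 < m' →
        ∀ X Y, X ∈ S → Y ∈ S → (k : ℝ) • x = (n' : ℝ) • X + (m' : ℝ) • Y →
          (∃ q : ℚ, 0 ≤ q ∧ X = (q : ℝ) • x) ∧ (∃ q : ℚ, 0 ≤ q ∧ Y = (q : ℝ) • x)) := by
  classical
  subst hC hS
  set M := A.map (fun q => (q : ℝ)) with hM
  obtain ⟨⟨hxpos, hxA⟩, hxint⟩ := hx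
  choose ξ hξ using hxint
  obtain ⟨j, hj⟩ : ∃ j, 0 < x j := by
    by_contra h
    push_neg at h
    exact hx0 (funext fun i => le_antisymm (h i) (hxpos i))
  have hxjξ : x j = (ξ j : ℝ) := hξ j
  have hξjposR : (0:ℝ) < (ξ j : ℝ) := by rw [← hxjξ]; exact hj
  have hξ0 : ∀ i, x i = 0 → ξ i = 0 := by
    intro i h0
    have : ((ξ i : ℤ) : ℝ) = 0 := by rw [← hξ i]; exact h0
    exact_mod_cast this
  have hξpos : ∀ i, x i ≠ 0 → 1 ≤ ξ i := by
    intro i h0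
    have h1 : (0:ℝ) < (ξ i : ℝ) := by
      rw [← hξ i]; exact lt_of_le_of_ne (hxpos i) (Ne.symm h0)
    have : (0:ℤ) < ξ i := by exact_mod_cast h1
    omega
  have hMapp : ∀ (w : Fin n → ℝ) s, M.mulVec w s = ∑ u, (A s u : ℝ) * w u := by
    intro w s
    simp [hM, Matrix.mulVec, dotProduct, Matrix.map_apply]
  -- rationality helper
  have hrat : ∀ (W : Fin n → ℝ), (∀ i, ∃ zz : ℤ, W i = (zz:ℝ)) → (∀ i, 0 ≤ W i) →
      (∃ cc : ℝ, 0 ≤ cc ∧ W = cc • x) → ∃ q : ℚ, 0 ≤ q ∧ W = (q:ℝ) • x := by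
    rintro W hWint hWpos ⟨cc, hc0, hcW⟩
    choose Wz hWz using hWint
    have hq : ((((Wz j : ℚ) / (ξ j : ℚ) : ℚ)) : ℝ) = cc := by
      have h := congrFun hcW j
      simp only [Pi.smul_apply, smul_eq_mul] at h
      rw [hWz j, hxjξ] at h
      push_cast
      rw [h, mul_div_assoc, div_self (ne_of_gt hξjposR), mul_one]
    refine ⟨((Wz j : ℚ) / (ξ j : ℚ) : ℚ), ?_, ?_⟩
    · have h1 : (0:ℝ) ≤ ((((Wz j : ℚ) / (ξ j : ℚ) : ℚ)) : ℝ) := by rw [hq]; exact hc0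
      exact_mod_cast h1
    · rw [hq]; exact hcW
  constructor
  · -- forward
    intro hext k n' m' hk hn hm X Y hX hY heq
    obtain ⟨hXC, hXint⟩ := hX
    obtain ⟨hYC, hYint⟩ := hY
    have hkR : (0:ℝ) < (k:ℝ) := by exact_mod_cast hk
    have hnR : (0:ℝ) < (n':ℝ) := by exact_mod_cast hn
    have hmR : (0:ℝ) < (m':ℝ) := by exact_mod_cast hm
    have hsm : ∀ (a : ℝ) (w : Fin n → ℝ), 0 ≤ a →
        w ∈ {x | (∀ i, 0 ≤ x i) ∧ M.mulVec x = 0} →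
        a • w ∈ {x | (∀ i, 0 ≤ x i) ∧ M.mulVec x = 0} := by
      intro a w ha hw
      refine ⟨fun i => ?_, ?_⟩
      · simpa using mul_nonneg ha (hw.1 i)
      · rw [Matrix.mulVec_smul, hw.2, smul_zero]
    have hyC := hsm ((n':ℝ)/(k:ℝ)) X (by positivity) hXC
    have hzC := hsm ((m':ℝ)/(k:ℝ)) Y (by positivity) hYC
    have hxeq : x = ((n':ℝ)/(k:ℝ)) • X + ((m':ℝ)/(k:ℝ)) • Y := by
      funext i
      have h := congrFun heq i
      simp only [Pi.add_apply, Pi.smul_apply, smul_eq_mul] at h ⊢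
      field_simp
      linarith [h]
    obtain ⟨⟨a, ha0, haX⟩, ⟨b, hb0, hbY⟩⟩ := hext _ _ hyC hzC hxeq
    have hrec : ∀ (c : ℝ) (a : ℝ) (W : Fin n → ℝ), 0 < c → 0 ≤ a →
        (c/(k:ℝ)) • W = a • x → ∃ cc : ℝ, 0 ≤ cc ∧ W = cc • x := by
      intro c a W hc ha hW
      refine ⟨((k:ℝ)/c) * a, mul_nonneg (by positivity) ha, ?_⟩
      have h2 : ((k:ℝ)/c) * (c/(k:ℝ)) = 1 := by field_simp
      calc W = (((k:ℝ)/c) * (c/(k:ℝ))) • W := by rw [h2, one_smul]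
        _ = ((k:ℝ)/c) • ((c/(k:ℝ)) • W) := by rw [smul_smul]
        _ = ((k:ℝ)/c) • (a • x) := by rw [hW]
        _ = (((k:ℝ)/c) * a) • x := by rw [smul_smul]
    exact ⟨hrat X hXint hXC.1 (hrec _ a X hnR ha0 haX),
           hrat Y hYint hYC.1 (hrec _ b Y hmR hb0 hbY)⟩
  · -- backward
    intro hR y z hy hz hsum
    have hAξq : ∀ s, ∑ u, A s u * ((ξ u : ℤ) : ℚ) = 0 := by
      intro s
      have h := congrFun hxA s
      rw [hMapp] at h
      simp only [Pi.zero_apply] at h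
      have h2 : ∑ u, (A s u : ℝ) * x u = ((∑ u, A s u * ((ξ u : ℤ) : ℚ) : ℚ) : ℝ) := by
        push_cast
        exact Finset.sum_congr rfl fun u _ => by rw [hξ u]
      rw [h2] at h
      exact_mod_cast h
    -- rational kernel is spanned by ξ
    have Hrat : ∀ v : Fin n → ℚ, A.mulVec v = 0 → (∀ i, x i = 0 → v i = 0) →
        ∃ q : ℚ, v = q • (fun i => ((ξ i : ℤ) : ℚ)) := by
      intro v hAv hvsupp
      have hAv' : ∀ s, ∑ u, A s u * v u = 0 := by
        intro s
        have := congrFun hAv s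
        simpa [Matrix.mulVec, dotProduct] using this
      set d : ℕ := ∏ i, (v i).den with hd
      have hdpos : 0 < d := Finset.prod_pos (fun i _ => (v i).pos)
      have hw : ∀ i, ∃ wz : ℤ, (d:ℚ) * v i = wz := by
        intro i
        obtain ⟨c, hc⟩ : (v i).den ∣ d := Finset.dvd_prod_of_mem _ (Finset.mem_univ i)
        refine ⟨c * (v i).num, ?_⟩
        have h1 : ((v i).den : ℚ) * v i = (v i).num := by
          rw [mul_comm]; exact_mod_cast (v i).mul_den_eq_num
        push_cast [hc]
        rw [mul_comm ((v i).den:ℚ) (c:ℚ), mul_assoc, h1]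
      choose w hwv using hw
      set N : ℕ := (Finset.univ.sup fun i => (w i).natAbs) + 1 with hN
      have hNw : ∀ i, ((w i).natAbs : ℤ) < (N:ℤ) := by
        intro i
        have : (w i).natAbs ≤ Finset.univ.sup fun i => (w i).natAbs :=
          Finset.le_sup (f := fun i => (w i).natAbs) (Finset.mem_univ i)
        omega
      have hw0 : ∀ i, x i = 0 → w i = 0 := by
        intro i h0
        have h1 : ((w i : ℤ) : ℚ) = 0 := by rw [← hwv i, hvsupp i h0, mul_zero]
        exact_mod_cast h1
      have hAw : ∀ s, ∑ u, A s u * ((w u : ℤ) : ℚ) = 0 := by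
        intro s
        have h1 : ∑ u, A s u * ((w u : ℤ) : ℚ) = (d:ℚ) * ∑ u, A s u * v u := by
          rw [Finset.mul_sum]
          refine Finset.sum_congr rfl fun u _ => ?_
          rw [← hwv u]; ring
        rw [h1, hAv' s, mul_zero]
      set X : Fin n → ℝ := fun i => (((N:ℤ) * ξ i + w i : ℤ) : ℝ) with hX
      set Y : Fin n → ℝ := fun i => (((N:ℤ) * ξ i - w i : ℤ) : ℝ) with hY
      have hbound : ∀ i, 0 ≤ (N:ℤ) * ξ i + w i ∧ 0 ≤ (N:ℤ) * ξ i - w i := by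
        intro i
        by_cases h0 : x i = 0
        · simp [hξ0 i h0, hw0 i h0]
        · have h1 := hξpos i h0
          have h2 := hNw i
          have h3 : (N:ℤ) ≤ (N:ℤ) * ξ i := le_mul_of_one_le_right (by positivity) h1
          omega
      have hmulvec : ∀ (f : Fin n → ℤ), (∀ s, ∑ u, A s u * ((f u : ℤ) : ℚ) = 0) →
          M.mulVec (fun i => ((f i : ℤ) : ℝ)) = 0 := by
        intro f hf
        funext s
        rw [hMapp]
        have h2 : ∑ u, (A s u : ℝ) * ((f u : ℤ) : ℝ)
            = ((∑ u, A s u * ((f u : ℤ) : ℚ) : ℚ) : ℝ) := by push_cast; rfl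
        rw [h2, hf s]
        simp
      have hXS : X ∈ {x ∈ {x | (∀ i, 0 ≤ x i) ∧ M.mulVec x = 0} | ∀ i, ∃ z : ℤ, x i = (z : ℝ)} := by
        refine ⟨⟨fun i => ?_, ?_⟩, fun i => ⟨(N:ℤ) * ξ i + w i, by simp [hX]⟩⟩
        · simp only [hX]; exact_mod_cast (hbound i).1
        · rw [hX]
          refine hmulvec _ fun s => ?_
          have h1 : ∑ u, A s u * (((N:ℤ) * ξ u + w u : ℤ) : ℚ)
              = (N:ℚ) * (∑ u, A s u * ((ξ u : ℤ) : ℚ)) + ∑ u, A s u * ((w u : ℤ) : ℚ) := by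
            rw [Finset.mul_sum, ← Finset.sum_add_distrib]
            refine Finset.sum_congr rfl fun u _ => ?_
            push_cast
            ring
          rw [h1, hAξq s, hAw s]
          ring
      have hYS : Y ∈ {x ∈ {x | (∀ i, 0 ≤ x i) ∧ M.mulVec x = 0} | ∀ i, ∃ z : ℤ, x i = (z : ℝ)} := by
        refine ⟨⟨fun i => ?_, ?_⟩, fun i => ⟨(N:ℤ) * ξ i - w i, by simp [hY]⟩⟩
        · simp only [hY]; exact_mod_cast (hbound i).2
        · rw [hY]
          refine hmulvec _ fun s => ?_
          have h1 : ∑ u, A s u * (((N:ℤ) * ξ u - w u : ℤ) : ℚ)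
              = (N:ℚ) * (∑ u, A s u * ((ξ u : ℤ) : ℚ)) - ∑ u, A s u * ((w u : ℤ) : ℚ) := by
            rw [Finset.mul_sum, ← Finset.sum_sub_distrib]
            refine Finset.sum_congr rfl fun u _ => ?_
            push_cast
            ring
          rw [h1, hAξq s, hAw s]
          ring
      have heq : ((2*N : ℕ) : ℝ) • x = ((1:ℕ) : ℝ) • X + ((1:ℕ) : ℝ) • Y := by
        funext i
        simp only [Pi.add_apply, Pi.smul_apply, smul_eq_mul, hX, hY]
        rw [hξ i]
        push_cast
        ring
      obtain ⟨⟨q, -, hqX⟩, -⟩ := hR (2*N) 1 1 (by omega) one_pos one_pos X Y hXS hYS heq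
      refine ⟨(q - N) / d, ?_⟩
      funext i
      have h1 := congrFun hqX i
      simp only [hX, Pi.smul_apply, smul_eq_mul] at h1
      rw [hξ i] at h1
      have h2 : ((w i : ℤ) : ℝ) = (((q - (N:ℚ)) * ((ξ i : ℤ) : ℚ) : ℚ) : ℝ) := by
        push_cast at h1 ⊢
        linarith [h1]
      have h3 : ((w i : ℤ) : ℚ) = (q - (N:ℚ)) * ((ξ i : ℤ) : ℚ) := by exact_mod_cast h2
      have h4 : (d:ℚ) * v i = (q - (N:ℚ)) * ((ξ i : ℤ) : ℚ) := by rw [hwv i, h3]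
      have hdne : (d:ℚ) ≠ 0 := by positivity
      simp only [Pi.smul_apply, smul_eq_mul]
      field_simp
      linarith [h4]
    -- real kernel argument
    have Hreal : ∀ w : Fin n → ℝ, (∀ i, 0 ≤ w i) → M.mulVec w = 0 →
        (∀ i, x i = 0 → w i = 0) → ∃ a : ℝ, 0 ≤ a ∧ w = a • x := by
      intro y hy1 hy2 hy3
      have key : ∀ i, (ξ j : ℝ) * y i = (ξ i : ℝ) * y j := by
        intro i
        set L : (Fin m ⊕ Fin n) → ((Fin n → ℚ) →ₗ[ℚ] ℚ) := fun t =>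
          Sum.elim (fun s => (LinearMap.proj s).comp A.mulVecLin)
                   (fun u => if x u = 0 then LinearMap.proj u else 0) t with hL
        set K : (Fin n → ℚ) →ₗ[ℚ] ℚ :=
          ((ξ j : ℤ) : ℚ) • LinearMap.proj i - ((ξ i : ℤ) : ℚ) • LinearMap.proj j with hK
        have hKapp : ∀ v : Fin n → ℚ, K v = ((ξ j : ℤ) : ℚ) * v i - ((ξ i : ℤ) : ℚ) * v j := by
          intro v
          simp [hK, LinearMap.sub_apply, LinearMap.smul_apply, LinearMap.proj_apply,
            smul_eq_mul]
        have hLinl : ∀ s (v : Fin n → ℚ), L (Sum.inl s) v = ∑ u, A s u * v u := by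
          intro s v
          simp [hL, Matrix.mulVecLin_apply, Matrix.mulVec, dotProduct]
        have hLinr : ∀ u0 (v : Fin n → ℚ), L (Sum.inr u0) v = if x u0 = 0 then v u0 else 0 := by
          intro u0 v
          by_cases h0 : x u0 = 0 <;> simp [hL, h0]
        have hker : ⨅ t, LinearMap.ker (L t) ≤ LinearMap.ker K := by
          intro v hv
          simp only [Submodule.mem_iInf] at hv
          have hAv : A.mulVec v = 0 := by
            funext s
            have h := hv (Sum.inl s)
            rw [LinearMap.mem_ker, hLinl] at h
            simpa [Matrix.mulVec, dotProduct] using h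
          have hsupp : ∀ u, x u = 0 → v u = 0 := by
            intro u h0
            have h := hv (Sum.inr u)
            rw [LinearMap.mem_ker, hLinr, if_pos h0] at h
            exact h
          obtain ⟨q, hq⟩ := Hrat v hAv hsupp
          rw [LinearMap.mem_ker, hKapp, hq]
          simp only [Pi.smul_apply, smul_eq_mul]
          ring
        obtain ⟨c, hc⟩ := (Submodule.mem_span_range_iff_exists_fun ℚ).1 (mem_span_of_iInf_ker_le_ker hker)
        have hcu : ∀ u, ∑ t, c t * (L t (Pi.single u 1)) = K (Pi.single u 1) := by
          intro u
          have h := LinearMap.congr_fun hc (Pi.single u 1)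
          simpa [LinearMap.sum_apply, LinearMap.smul_apply, smul_eq_mul] using h
        have hval1 : ∀ s u, L (Sum.inl s) (Pi.single u 1) = A s u := by
          intro s u
          rw [hLinl]
          simp [Pi.single_apply, mul_ite, Finset.sum_ite_eq']
        have hval2 : ∀ u0 u, L (Sum.inr u0) (Pi.single u 1)
            = if x u0 = 0 then (if u0 = u then 1 else 0) else 0 := by
          intro u0 u
          rw [hLinr]
          by_cases h0 : x u0 = 0 <;> simp [h0, Pi.single_apply]
        have hvalK : ∀ u, K (Pi.single u 1)
            = ((ξ j : ℤ) : ℚ) * (if i = u then 1 else 0)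
              - ((ξ i : ℤ) : ℚ) * (if j = u then 1 else 0) := by
          intro u
          rw [hKapp]
          simp [Pi.single_apply]
        have main : (ξ j:ℝ) * y i - (ξ i:ℝ) * y j = 0 := by
          have e1 : (ξ j:ℝ) * y i - (ξ i:ℝ) * y j
              = ∑ u, ((K (Pi.single u 1) : ℚ) : ℝ) * y u := by
            have h5 : ∀ u:Fin n, ((K (Pi.single u 1) : ℚ) : ℝ) * y u
                = (if i = u then (ξ j:ℝ) * y u else 0)
                  - (if j = u then (ξ i:ℝ) * y u else 0) := by
              intro u
              rw [hvalK u]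
              by_cases h1 : i = u <;> by_cases h2 : j = u <;>
                simp [h1, h2] <;> push_cast <;> ring
            simp_rw [h5]
            rw [Finset.sum_sub_distrib]
            simp [Finset.sum_ite_eq]
          have e2 : ∀ u, ((K (Pi.single u 1) : ℚ) : ℝ) * y u
              = ∑ t, ((c t : ℝ) * ((L t (Pi.single u 1) : ℚ) : ℝ)) * y u := by
            intro u
            rw [← hcu u]
            push_cast
            rw [Finset.sum_mul]
          have e3 : ∑ u, ((K (Pi.single u 1):ℚ):ℝ) * y u
              = ∑ t, (c t:ℝ) * (∑ u, ((L t (Pi.single u 1):ℚ):ℝ) * y u) := by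
            simp_rw [e2]
            rw [Finset.sum_comm]
            refine Finset.sum_congr rfl fun t _ => ?_
            rw [Finset.mul_sum]
            exact Finset.sum_congr rfl fun u _ => by ring
          rw [e1, e3]
          refine Finset.sum_eq_zero fun t _ => ?_
          rcases t with s | u0
          · have h1 : ∑ u, ((L (Sum.inl s) (Pi.single u 1):ℚ):ℝ) * y u = M.mulVec y s := by
              rw [hMapp]
              exact Finset.sum_congr rfl fun u _ => by rw [hval1]
            rw [h1, hy2]
            simp
          · by_cases h0 : x u0 = 0
            · have h1 : ∑ u, ((L (Sum.inr u0) (Pi.single u 1):ℚ):ℝ) * y u = y u0 := by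
                have h2 : ∀ u, ((L (Sum.inr u0) (Pi.single u 1):ℚ):ℝ) * y u
                    = if u0 = u then y u else 0 := by
                  intro u
                  rw [hval2, if_pos h0]
                  by_cases h3 : u0 = u <;> simp [h3]
                simp_rw [h2]
                simp [Finset.sum_ite_eq]
              rw [h1, hy3 u0 h0, mul_zero]
            · have h1 : ∀ u, ((L (Sum.inr u0) (Pi.single u 1):ℚ):ℝ) = 0 := by
                intro u
                rw [hval2]
                simp [h0]
              simp [h1]
        linarith [main]
      refine ⟨y j / x j, div_nonneg (hy1 j) (le_of_lt hj), ?_⟩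
      funext i
      simp only [Pi.smul_apply, smul_eq_mul]
      rw [hξ i, hxjξ]
      have hne : (ξ j : ℝ) ≠ 0 := ne_of_gt hξjposR
      field_simp
      linear_combination (key i)
    have hz0 : ∀ i, x i = 0 → y i = 0 ∧ z i = 0 := by
      intro i h0
      have h := congrFun hsum i
      simp only [Pi.add_apply] at h
      constructor <;> nlinarith [hy.1 i, hz.1 i]
    exact ⟨Hreal y hy.1 hy.2 (fun i h => (hz0 i h).1),
           Hreal z hz.1 hz.2 (fun i h => (hz0 i h).2)⟩
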